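/- Let n be a positive integer, α > 0, and i, j positive integers. Define φ_i(x) = √2·sin((i−1/2)πx), φ_{n,i}(τ) = (αe/n)^{n/2}·φ_i(τⁿ e^{−ατ}·(αe/n)ⁿ), and ρ(τ) = (1/2)·τ^{n−1} e^{−ατ}·|n − ατ|. Then ∫₀^∞ φ_{n,i}(τ) φ_{n,j}(τ) ρ(τ) dτ = 1 if i = j, and = 0 if i ≠ j. -/
import Mathlib

open MeasureTheory Real Set Filter

/-- Eigenfunction `φ_{n,i}(τ) = (αe/n)^{n/2} φᵢ(τⁿ e^{-ατ} (αe/n)ⁿ)` with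
`φᵢ(x) = √2 sin((i-1/2)πx)`. -/
noncomputable def phiMS (n : ℕ) (α : ℝ) (i : ℕ) (τ : ℝ) : ℝ :=
  (α * Real.exp 1 / (n : ℝ)) ^ ((n : ℝ) / 2) *
    (Real.sqrt 2 *
      Real.sin (((i : ℝ) - 1/2) * π * (τ ^ n * Real.exp (-α * τ) * (α * Real.exp 1 / (n : ℝ)) ^ n)))

/-- Density `ρ(τ) = (1/2) τ^{n-1} e^{-ατ} |n - ατ|` of the measure `dm`. -/
noncomputable def rhoMS (n : ℕ) (α : ℝ) (τ : ℝ) : ℝ :=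
  (1/2) * τ ^ (n - 1) * Real.exp (-α * τ) * |(n : ℝ) - α * τ|

/-- change of variable map -/
noncomputable def uMS (n : ℕ) (α : ℝ) (τ : ℝ) : ℝ :=
  τ ^ n * Real.exp (-α * τ) * (α * Real.exp 1 / (n : ℝ)) ^ n

/-- its derivative -/
noncomputable def uMS' (n : ℕ) (α : ℝ) (τ : ℝ) : ℝ :=
  τ ^ (n - 1) * Real.exp (-α * τ) * ((n : ℝ) - α * τ) * (α * Real.exp 1 / (n : ℝ)) ^ n

/-- transported integrand -/
noncomputable def gMS (i j : ℕ) (x : ℝ) : ℝ :=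
  Real.sin (((i : ℝ) - 1/2) * π * x) * Real.sin (((j : ℝ) - 1/2) * π * x)

lemma uMS_hasDerivAt (n : ℕ) (hn : 1 ≤ n) (α : ℝ) (τ : ℝ) :
    HasDerivAt (uMS n α) (uMS' n α τ) τ := by
  obtain ⟨m, rfl⟩ : ∃ m, n = m + 1 := ⟨n - 1, (Nat.succ_pred_eq_of_pos hn).symm⟩
  set C : ℝ := (α * Real.exp 1 / ((m + 1 : ℕ) : ℝ)) ^ (m + 1) with hC
  have h1 : HasDerivAt (fun t : ℝ => t ^ (m + 1)) (((m + 1 : ℕ) : ℝ) * τ ^ m) τ :=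
    hasDerivAt_pow (m + 1) τ
  have h2 : HasDerivAt (fun t : ℝ => Real.exp (-α * t)) (Real.exp (-α * τ) * (-α * 1)) τ :=
    ((hasDerivAt_id τ).const_mul (-α)).exp
  have h3 : HasDerivAt (fun t : ℝ => t ^ (m + 1) * Real.exp (-α * t) * C)
      ((((m + 1 : ℕ) : ℝ) * τ ^ m * Real.exp (-α * τ)
        + τ ^ (m + 1) * (Real.exp (-α * τ) * (-α * 1))) * C) τ := (h1.mul h2).mul_const C
  have hD : uMS' (m + 1) α τ
      = (((m + 1 : ℕ) : ℝ) * τ ^ m * Real.exp (-α * τ)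
        + τ ^ (m + 1) * (Real.exp (-α * τ) * (-α * 1))) * C := by
    unfold uMS'
    simp only [Nat.add_sub_cancel, ← hC]
    push_cast
    ring
  rw [hD]
  exact h3

lemma uMS_zero (n : ℕ) (hn : 1 ≤ n) (α : ℝ) : uMS n α 0 = 0 := by
  unfold uMS
  rw [zero_pow (by omega : n ≠ 0)]
  ring

lemma uMS_top (n : ℕ) (hn : 1 ≤ n) (α : ℝ) (hα : 0 < α) : uMS n α ((n : ℝ) / α) = 1 := by
  have hn' : ((n : ℝ)) ≠ 0 := Nat.cast_ne_zero.mpr (by omega)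
  unfold uMS
  have e1 : -α * ((n : ℝ) / α) = -(n : ℝ) := by field_simp
  rw [e1, mul_right_comm, ← mul_pow]
  have e2 : (n : ℝ) / α * (α * Real.exp 1 / (n : ℝ)) = Real.exp 1 := by field_simp
  rw [e2, Real.exp_one_pow, ← Real.exp_add]
  simp

lemma algMS {P S c s1 s2 e1 e2 e3 : ℝ} (hP : P * P = c) (hS : S * S = 2) :
    P * (S * s1) * (P * (S * s2)) * (1/2 * e1 * e2 * e3) = e1 * e2 * e3 * c * (s1 * s2) := by
  linear_combination (s1 * s2 * e1 * e2 * e3 * (S * S) / 2) * hP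
    + (s1 * s2 * e1 * e2 * e3 * c / 2) * hS

lemma pt_eq (n : ℕ) (hn : 1 ≤ n) (α : ℝ) (hα : 0 < α) (i j : ℕ) {τ : ℝ} (hτ : 0 ≤ τ) :
    phiMS n α i τ * phiMS n α j τ * rhoMS n α τ = |uMS' n α τ| * gMS i j (uMS n α τ) := by
  have hn' : (0 : ℝ) < (n : ℝ) := by exact_mod_cast Nat.pos_of_ne_zero (by omega)
  have hA : 0 < α * Real.exp 1 / (n : ℝ) := div_pos (mul_pos hα (Real.exp_pos 1)) hn'
  have h2 : Real.sqrt 2 * Real.sqrt 2 = 2 := Real.mul_self_sqrt (by norm_num)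
  have hAA : (α * Real.exp 1 / (n : ℝ)) ^ ((n : ℝ) / 2) * (α * Real.exp 1 / (n : ℝ)) ^ ((n : ℝ) / 2)
      = (α * Real.exp 1 / (n : ℝ)) ^ n := by
    rw [← Real.rpow_add hA, ← Real.rpow_natCast (α * Real.exp 1 / (n : ℝ)) n]
    norm_num
  unfold phiMS rhoMS gMS uMS uMS'
  rw [abs_mul, abs_mul, abs_mul, abs_of_nonneg (pow_nonneg hτ (n - 1)),
    abs_of_nonneg (Real.exp_pos (-α * τ)).le,
    abs_of_nonneg (pow_nonneg hA.le n)]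
  exact algMS hAA h2

lemma intcosMS (k : ℝ) (hk : k ≠ 0) :
    ∫ x in (0:ℝ)..1, Real.cos (k * x) = Real.sin k / k := by
  rw [intervalIntegral.integral_comp_mul_left (fun x => Real.cos x) hk]
  simp [integral_cos, smul_eq_mul, inv_mul_eq_div]

lemma orthoMS (i j : ℕ) (hi : 1 ≤ i) (hj : 1 ≤ j) :
    ∫ x in (0:ℝ)..1, gMS i j x = if i = j then 1/2 else 0 := by
  have hπ := Real.pi_pos
  set a : ℝ := ((i : ℝ) - 1/2) * π with ha
  set b : ℝ := ((j : ℝ) - 1/2) * π with hb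
  have key : ∀ x : ℝ, gMS i j x
      = (Real.cos ((a - b) * x) - Real.cos ((a + b) * x)) / 2 := by
    intro x
    have h := Real.cos_sub_cos ((a - b) * x) ((a + b) * x)
    have e1 : ((a - b) * x + (a + b) * x) / 2 = a * x := by ring
    have e2 : ((a - b) * x - (a + b) * x) / 2 = -(b * x) := by ring
    rw [e1, e2, Real.sin_neg] at h
    unfold gMS
    rw [ha, hb]
    have : a * x = ((i : ℝ) - 1/2) * π * x := by rw [ha]
    rw [← this, ← show b * x = ((j : ℝ) - 1/2) * π * x from by rw [hb]]
    linarith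
  have hi' : (1 : ℝ) ≤ (i : ℝ) := by exact_mod_cast hi
  have hj' : (1 : ℝ) ≤ (j : ℝ) := by exact_mod_cast hj
  have hsum : ∫ x in (0:ℝ)..1, Real.cos ((a + b) * x) = 0 := by
    have hab : a + b = ((i + j - 1 : ℕ) : ℝ) * π := by
      rw [ha, hb]
      push_cast [Nat.cast_sub (show 1 ≤ i + j by omega)]
      ring
    have hne : a + b ≠ 0 := by
      rw [ha, hb]; nlinarith
    rw [intcosMS _ hne, hab, Real.sin_nat_mul_pi, zero_div]
  have hdiff : ∫ x in (0:ℝ)..1, Real.cos ((a - b) * x) = if i = j then 1 else 0 := by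
    by_cases hij : i = j
    · subst hij
      simp [sub_self, ha, hb]
    · have hab : a - b = (((i : ℤ) - (j : ℤ) : ℤ) : ℝ) * π := by
        rw [ha, hb]; push_cast; ring
      have hne : a - b ≠ 0 := by
        rw [hab]
        have : ((i : ℤ) - (j : ℤ)) ≠ 0 := by
          simp only [sub_ne_zero]; exact_mod_cast hij
        have : (((i : ℤ) - (j : ℤ) : ℤ) : ℝ) ≠ 0 := by exact_mod_cast this
        positivity
      rw [intcosMS _ hne, hab, Real.sin_int_mul_pi, zero_div, if_neg hij]
  have hc1 : IntervalIntegrable (fun x => Real.cos ((a - b) * x)) volume 0 1 :=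
    (by fun_prop : Continuous fun x => Real.cos ((a - b) * x)).intervalIntegrable 0 1
  have hc2 : IntervalIntegrable (fun x => Real.cos ((a + b) * x)) volume 0 1 :=
    (by fun_prop : Continuous fun x => Real.cos ((a + b) * x)).intervalIntegrable 0 1
  simp_rw [key]
  rw [intervalIntegral.integral_div, intervalIntegral.integral_sub hc1 hc2, hdiff, hsum]
  split <;> norm_num

/-- For positive integers `n, i, j` and `α > 0`,
`∫₀^∞ φ_{n,i}(τ) φ_{n,j}(τ) ρ(τ) dτ = 1` if `i = j` and `= 0` if `i ≠ j`. -/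
theorem stmt_17 (n : ℕ) (hn : 1 ≤ n) (α : ℝ) (hα : 0 < α)
    (i j : ℕ) (hi : 1 ≤ i) (hj : 1 ≤ j) :
    ∫ τ in Set.Ici (0 : ℝ), phiMS n α i τ * phiMS n α j τ * rhoMS n α τ
      = if i = j then 1 else 0 := by
  have hn' : (0 : ℝ) < (n : ℝ) := by exact_mod_cast Nat.pos_of_ne_zero (by omega)
  set b : ℝ := (n : ℝ) / α with hbdef
  have hb0 : 0 < b := div_pos hn' hα
  have hA : 0 < α * Real.exp 1 / (n : ℝ) := div_pos (mul_pos hα (Real.exp_pos 1)) hn'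
  have hc : 0 < (α * Real.exp 1 / (n : ℝ)) ^ n := pow_pos hA n
  have hGcont : Continuous (gMS i j) := by unfold gMS; fun_prop
  have hucont : Continuous (uMS n α) := by unfold uMS; fun_prop
  have hu'cont : Continuous (uMS' n α) := by unfold uMS'; fun_prop
  have hderiv : ∀ τ : ℝ, HasDerivAt (uMS n α) (uMS' n α τ) τ := uMS_hasDerivAt n hn α
  have hu0 : uMS n α 0 = 0 := uMS_zero n hn α
  have hub : uMS n α b = 1 := uMS_top n hn α hα
  have hupos : ∀ τ : ℝ, 0 < τ → 0 < uMS n α τ := by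
    intro τ hτ; unfold uMS; positivity
  have hu'neg : ∀ x ∈ Set.Ioi b, uMS' n α x < 0 := by
    intro x hx
    have hxb : b < x := hx
    have hx0 : 0 < x := hb0.trans hxb
    have hax : (n : ℝ) < α * x := by
      rw [hbdef, div_lt_iff₀ hα] at hxb; linarith [mul_comm α x]
    unfold uMS'
    have h1 : 0 < x ^ (n - 1) * Real.exp (-α * x) := by positivity
    exact mul_neg_of_neg_of_pos (mul_neg_of_pos_of_neg h1 (by linarith)) hc
  have hanti : StrictAntiOn (uMS n α) (Set.Ici b) := by
    apply strictAntiOn_of_deriv_neg (convex_Ici b) hucont.continuousOn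
    intro x hx
    rw [interior_Ici] at hx
    rw [(hderiv x).deriv]
    exact hu'neg x hx
  have hinj : Set.InjOn (uMS n α) (Set.Ioi b) :=
    hanti.injOn.mono Set.Ioi_subset_Ici_self
  have htend : Filter.Tendsto (uMS n α) Filter.atTop (nhds 0) := by
    have h1 : Filter.Tendsto (fun τ : ℝ => α * τ) Filter.atTop Filter.atTop :=
      Filter.tendsto_id.const_mul_atTop hα
    have h2 := (tendsto_pow_mul_exp_neg_atTop_nhds_zero n).comp h1
    have h3 := h2.mul_const ((α * Real.exp 1 / (n : ℝ)) ^ n / α ^ n)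
    rw [zero_mul] at h3
    refine h3.congr fun τ => ?_
    show (α * τ) ^ n * Real.exp (-(α * τ)) * ((α * Real.exp 1 / (n : ℝ)) ^ n / α ^ n)
        = uMS n α τ
    unfold uMS
    rw [neg_mul α τ, mul_pow]
    have hαn : α ^ n ≠ 0 := pow_ne_zero n hα.ne'
    field_simp
  have himg : uMS n α '' Set.Ioi b = Set.Ioo 0 1 := by
    apply Set.Subset.antisymm
    · rintro y ⟨τ, hτ, rfl⟩
      refine ⟨hupos τ (hb0.trans hτ), ?_⟩
      have := hanti (Set.self_mem_Ici) (Set.Ioi_subset_Ici_self hτ) hτ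
      rw [hub] at this; exact this
    · rintro y ⟨hy0, hy1⟩
      have hev : ∀ᶠ τ in Filter.atTop, uMS n α τ < y := htend.eventually (gt_mem_nhds hy0)
      obtain ⟨T, hTb, hTy⟩ := ((Filter.eventually_ge_atTop b).and hev).exists
      have hsub := intermediate_value_Icc' hTb hucont.continuousOn
      obtain ⟨τ, hτmem, hτy⟩ := hsub ⟨hTy.le, by rw [hub]; exact hy1.le⟩
      refine ⟨τ, ?_, hτy⟩
      rcases eq_or_lt_of_le hτmem.1 with h | h
      · exfalso; rw [← h, hub] at hτy; linarith
      · exact h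
  have hGint : IntegrableOn (gMS i j) (Set.Ioo (0:ℝ) 1) :=
    (hGcont.integrableOn_Icc).mono_set Set.Ioo_subset_Icc_self
  have hEqOn : Set.EqOn (fun τ => |uMS' n α τ| • gMS i j (uMS n α τ))
      (fun τ => phiMS n α i τ * phiMS n α j τ * rhoMS n α τ) (Set.Ioi b) := by
    intro τ hτ
    have hτ0 : (0:ℝ) ≤ τ := (hb0.trans hτ).le
    simp only [smul_eq_mul]
    exact (pt_eq n hn α hα i j hτ0).symm
  have hint2 : IntegrableOn (fun τ => phiMS n α i τ * phiMS n α j τ * rhoMS n α τ)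
      (Set.Ioi b) := by
    have h1 : IntegrableOn (fun τ => |uMS' n α τ| • gMS i j (uMS n α τ)) (Set.Ioi b) := by
      refine (integrableOn_image_iff_integrableOn_abs_deriv_smul measurableSet_Ioi
        (fun x _ => (hderiv x).hasDerivWithinAt) hinj (gMS i j)).mp ?_
      rw [himg]; exact hGint
    exact h1.congr_fun hEqOn measurableSet_Ioi
  have hint1 : IntegrableOn (fun τ => phiMS n α i τ * phiMS n α j τ * rhoMS n α τ)
      (Set.Icc 0 b) := by
    apply Continuous.integrableOn_Icc
    unfold phiMS rhoMS; fun_prop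
  have hsplit : ∫ τ in Set.Ici (0:ℝ), phiMS n α i τ * phiMS n α j τ * rhoMS n α τ
      = (∫ τ in Set.Icc (0:ℝ) b, phiMS n α i τ * phiMS n α j τ * rhoMS n α τ)
        + ∫ τ in Set.Ioi b, phiMS n α i τ * phiMS n α j τ * rhoMS n α τ := by
    rw [← Set.Icc_union_Ioi_eq_Ici hb0.le]
    exact setIntegral_union ((Set.Iic_disjoint_Ioi le_rfl).mono_left Set.Icc_subset_Iic_self)
      measurableSet_Ioi hint1 hint2
  have piece2 : ∫ τ in Set.Ioi b, phiMS n α i τ * phiMS n α j τ * rhoMS n α τ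
      = ∫ x in (0:ℝ)..1, gMS i j x := by
    rw [← setIntegral_congr_fun measurableSet_Ioi hEqOn,
      ← integral_image_eq_integral_abs_deriv_smul measurableSet_Ioi
        (fun x _ => (hderiv x).hasDerivWithinAt) hinj (gMS i j),
      himg, intervalIntegral.integral_of_le zero_le_one, integral_Ioc_eq_integral_Ioo]
  have piece1 : ∫ τ in Set.Icc (0:ℝ) b, phiMS n α i τ * phiMS n α j τ * rhoMS n α τ
      = ∫ x in (0:ℝ)..1, gMS i j x := by
    have hEqOn1 : Set.EqOn (fun τ => phiMS n α i τ * phiMS n α j τ * rhoMS n α τ)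
        (fun τ => uMS' n α τ • gMS i j (uMS n α τ)) (Set.Icc 0 b) := by
      intro τ hτ
      have hu'nn : 0 ≤ uMS' n α τ := by
        have hτα : α * τ ≤ (n : ℝ) := by
          have := hτ.2
          rw [hbdef, le_div_iff₀ hα] at this
          linarith [mul_comm τ α]
        unfold uMS'
        have h1 : (0:ℝ) ≤ τ ^ (n - 1) * Real.exp (-α * τ) :=
          mul_nonneg (pow_nonneg hτ.1 _) (Real.exp_pos _).le
        exact mul_nonneg (mul_nonneg h1 (by linarith)) hc.le
      simp only [smul_eq_mul]
      rw [pt_eq n hn α hα i j hτ.1, abs_of_nonneg hu'nn]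
    have hcv := intervalIntegral.integral_comp_smul_deriv
      (fun x (_ : x ∈ Set.uIcc (0:ℝ) b) => hderiv x) hu'cont.continuousOn hGcont
    simp only [Function.comp] at hcv
    rw [setIntegral_congr_fun measurableSet_Icc hEqOn1,
      MeasureTheory.integral_Icc_eq_integral_Ioc, ← intervalIntegral.integral_of_le hb0.le,
      hcv, hu0, hub]
  rw [hsplit, piece1, piece2, orthoMS i j hi hj]
  split <;> norm_num
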